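/- Let G be a simple graph such that λ_min(S(K_4 ∪ 5K_1)) < −5 and every proper induced subgraph H of K_4 ∪ 5K_1 satisfies λ_min(S(H)) ≥ −5; i.e., K_4(5) (the disjoint union of the complete graph K_4 and 5 isolated vertices) belongs to F_{−5}. Similarly, K_{2,1,1}(11) (the diamond K_4 minus an edge together with 11 isolated vertices) and K_{2,3}(19) (the complete bipartite graph K_{2,3} together with 19 isolated vertices) belong to F_{−5}. -/

import Mathlib

open Matrix

/-- A Seidel matrix: symmetric, zero diagonal, off-diagonal entries `±1`. -/
def IsSeidel {n : ℕ} (S : Matrix (Fin n) (Fin n) ℝ) : Prop :=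
  S.IsSymm ∧ (∀ i, S i i = 0) ∧ ∀ i j, i ≠ j → S i j = 1 ∨ S i j = -1

/-- Smallest eigenvalue of a real symmetric matrix (junk value `0` if not Hermitian). -/
noncomputable def minEig {m : Type*} [Fintype m] [DecidableEq m] (A : Matrix m m ℝ) : ℝ := by
  classical
  exact if hA : A.IsHermitian then ⨅ i, hA.eigenvalues i else 0

/-- Largest eigenvalue of a real symmetric matrix (junk value `0` if not Hermitian). -/
noncomputable def maxEig {m : Type*} [Fintype m] [DecidableEq m] (A : Matrix m m ℝ) : ℝ := by
  classical
  exact if hA : A.IsHermitian then ⨆ i, hA.eigenvalues i else 0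

/-- The Seidel matrix of a simple graph `G`, i.e. `J - I - 2A(G)`:
zero diagonal, `-1` on adjacent pairs, `1` on distinct non-adjacent pairs. -/
noncomputable def seidelOf {V : Type*} [Fintype V] (G : SimpleGraph V) : Matrix V V ℝ := by
  classical
  exact Matrix.of fun i j => if i = j then 0 else if G.Adj i j then -1 else 1

/-- Smallest eigenvalue of the Seidel matrix of a finite graph. -/
noncomputable def minSeidelEig {V : Type*} [Finite V] (G : SimpleGraph V) : ℝ := by
  classical
  letI := Fintype.ofFinite V
  exact minEig (seidelOf G)

/-- Spectral radius (largest adjacency eigenvalue) of a finite graph. -/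
noncomputable def specRad {V : Type*} [Finite V] (G : SimpleGraph V) : ℝ := by
  classical
  letI := Fintype.ofFinite V
  exact maxEig (G.adjMatrix ℝ)

/-- Switching equivalence: `T = D S D` for some diagonal `±1` matrix `D`. -/
def SwEquiv {n : ℕ} (S T : Matrix (Fin n) (Fin n) ℝ) : Prop :=
  ∃ ε : Fin n → ℝ, (∀ i, ε i = 1 ∨ ε i = -1) ∧
    T = Matrix.diagonal ε * S * Matrix.diagonal ε

/-- The switching graph of a Seidel matrix `S`: the graph on `2n` vertices whose Seidel
matrix is the block matrix `((S, I - S), (I - S, S))`, adjacency given by entries `-1`. -/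
def switchGraph {n : ℕ} (S : Matrix (Fin n) (Fin n) ℝ) : SimpleGraph (Fin n ⊕ Fin n) :=
  SimpleGraph.fromRel fun x y => Matrix.fromBlocks S (1 - S) (1 - S) S x y = -1

/-- Independence number of a graph. -/
noncomputable def indepNum {V : Type*} (G : SimpleGraph V) : ℕ := Gᶜ.cliqueNum

/-- The graph consisting of `t` disjoint copies of `K₂`. -/
def nK2 (t : ℕ) : SimpleGraph (Fin t × Fin 2) :=
  SimpleGraph.fromRel fun p q => p.1 = q.1

/-- Membership in `F_{-5}`: `λ_min(S(G)) < -5` while every proper induced subgraph `H`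
satisfies `λ_min(S(H)) ≥ -5`. -/
def MemF5 {V : Type*} [Finite V] (G : SimpleGraph V) : Prop :=
  minSeidelEig G < -5 ∧ ∀ s : Set V, s ≠ Set.univ → -5 ≤ minSeidelEig (G.induce s)

/-- The diamond `K_{2,1,1}`: the complete graph `K₄` minus the edge `0–1`. -/
def diamondG : SimpleGraph (Fin 4) :=
  SimpleGraph.fromRel fun i j =>
    (i = 0 ∧ j = 2) ∨ (i = 0 ∧ j = 3) ∨ (i = 1 ∧ j = 2) ∨ (i = 1 ∧ j = 3) ∨ (i = 2 ∧ j = 3)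

/-!
On `G ⊕ mK₁` write a vector as `z = (x, y)`, with `p = Σ x` and `q = Σ y`. Its Seidel form is
`xᵀ S(G) x + q² - ‖y‖² + 2 p q`. If `q² ≤ k ‖y‖²`, minimising over `y` shows that the form is at
least `-5 ‖z‖²` as soon as `k p² ≤ (k + 4) (xᵀ S(G) x + 5 ‖x‖²)`.

A proper induced subgraph misses some vertex `w`, and its Seidel form is that of the whole graph
restricted to vectors with `z w = 0`. If `w` is isolated, Cauchy–Schwarz gives `k = m - 1`;
otherwise `k = m` and `x w = 0`. In each case the remaining inequality in the few coordinates of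
`x` is a sum of squares, and for `K_{2,1,1}(11)` and `K_{2,3}(19)` it is tight. A test vector
that is constant on the parts of each graph gives `λ_min < -5` for the whole graph.
-/
open Finset

section Spectral

variable {n : Type*} [Fintype n] [DecidableEq n] {A : Matrix n n ℝ}

theorem le_minEig_iff [Nonempty n] (hA : A.IsHermitian) (c : ℝ) :
    c ≤ minEig A ↔ ∀ x : n → ℝ, c * (x ⬝ᵥ x) ≤ x ⬝ᵥ A *ᵥ x := by
  rw [minEig, dif_pos hA, le_ciInf_iff (Set.finite_range _).bddBelow]
  constructor
  · intro h x
    have hpsd : (A - algebraMap ℝ _ c).PosSemidef := by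
      refine posSemidef_iff_isHermitian_and_spectrum_nonneg.mpr
        ⟨hA.sub (isHermitian_diagonal _), ?_⟩
      rw [← spectrum.sub_singleton_eq, hA.spectrum_real_eq_range_eigenvalues]
      rintro _ ⟨_, ⟨i, rfl⟩, _, rfl, rfl⟩
      exact sub_nonneg.mpr (h i)
    have := hpsd.dotProduct_mulVec_nonneg x
    simp only [star_trivial, sub_mulVec, dotProduct_sub, Algebra.algebraMap_eq_smul_one,
      smul_mulVec, one_mulVec, dotProduct_smul, smul_eq_mul] at this
    linarith
  · intro h i
    have hunit : ⇑(hA.eigenvectorBasis i) ⬝ᵥ ⇑(hA.eigenvectorBasis i) = 1 := by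
      have h1 := real_inner_self_eq_norm_sq (hA.eigenvectorBasis i)
      rw [hA.eigenvectorBasis.orthonormal.1 i, EuclideanSpace.inner_eq_star_dotProduct] at h1
      simpa using h1
    simpa [hA.mulVec_eigenvectorBasis i, hunit] using h (hA.eigenvectorBasis i)

end Spectral

section QuadraticForm

variable {m n : Type*} [Fintype m] [Fintype n]

theorem dotProduct_submatrix_mulVec {R : Type*} [CommSemiring R] (M : Matrix n n R)
    {f : m → n} (hf : Function.Injective f) (x : m → R) :
    x ⬝ᵥ M.submatrix f f *ᵥ x = Function.extend f x 0 ⬝ᵥ M *ᵥ Function.extend f x 0 := by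
  have hout : ∀ j ∉ Set.range f, Function.extend f x 0 j = 0 := fun j hj =>
    Function.extend_apply' _ _ _ fun ⟨i, hi⟩ => hj ⟨i, hi⟩
  simp only [dotProduct, mulVec]
  refine Fintype.sum_of_injective f hf _ _ (fun j hj => by simp [hout j hj]) fun i => ?_
  rw [hf.extend_apply]
  congr 1
  exact Fintype.sum_of_injective f hf _ _ (fun j hj => by simp [hout j hj])
    fun k => by rw [hf.extend_apply, submatrix_apply]

theorem sq_sum_le_card_sub_one_mul_sum_sq {x : n → ℝ} {w : n} (hw : x w = 0) :
    (∑ i, x i) ^ 2 ≤ ((Fintype.card n - 1 : ℕ) : ℝ) * ∑ i, x i ^ 2 := by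
  classical
  rw [← sum_erase univ hw, ← sum_erase univ (f := fun i => x i ^ 2) (a := w) (by simp [hw]),
    ← card_univ, ← card_erase_of_mem (mem_univ w)]
  exact sq_sum_le_card_mul_sum_sq

end QuadraticForm

section Seidel

variable {V W : Type*} [Fintype V] [Fintype W]

theorem seidelOf_isHermitian (G : SimpleGraph V) : (seidelOf G).IsHermitian := by
  ext i j
  by_cases h : i = j
  · simp [seidelOf, h]
  · simp only [seidelOf, conjTranspose_apply, of_apply, Ne.symm h, ↓reduceIte, star_trivial, h]
    rw [G.adj_comm]

theorem seidelOf_induce (G : SimpleGraph V) (s : Set V) [Fintype s] :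
    seidelOf (G.induce s) = (seidelOf G).submatrix (↑) (↑) := by
  ext i j
  simp only [seidelOf, of_apply, submatrix_apply, SimpleGraph.induce_adj]
  congr! 1
  exact Subtype.ext_iff

theorem minSeidelEig_eq_minEig [DecidableEq V] (G : SimpleGraph V) :
    minSeidelEig G = minEig (seidelOf G) := by
  unfold minSeidelEig
  congr!

theorem le_minSeidelEig_iff [DecidableEq V] [Nonempty V] (G : SimpleGraph V) (c : ℝ) :
    c ≤ minSeidelEig G ↔ ∀ x : V → ℝ, c * (x ⬝ᵥ x) ≤ x ⬝ᵥ seidelOf G *ᵥ x := by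
  rw [minSeidelEig_eq_minEig, le_minEig_iff (seidelOf_isHermitian G)]

theorem le_minSeidelEig_induce {G : SimpleGraph V} {c : ℝ} (hc : c ≤ 0) {w : V}
    (h : ∀ x : V → ℝ, x w = 0 → c * (x ⬝ᵥ x) ≤ x ⬝ᵥ seidelOf G *ᵥ x) {s : Set V} (hw : w ∉ s) :
    c ≤ minSeidelEig (G.induce s) := by
  classical
  rcases isEmpty_or_nonempty s with hs | hs
  · rwa [minSeidelEig_eq_minEig, minEig, dif_pos (seidelOf_isHermitian _), Real.iInf_of_isEmpty]
  refine (le_minSeidelEig_iff _ c).mpr fun x => ?_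
  have hself := dotProduct_submatrix_mulVec 1 Subtype.val_injective x
  rw [submatrix_one _ Subtype.val_injective, one_mulVec, one_mulVec] at hself
  rw [hself, seidelOf_induce, dotProduct_submatrix_mulVec _ Subtype.val_injective]
  exact h _ (Function.extend_apply' _ _ _ fun ⟨i, hi⟩ => hw (hi ▸ i.2))

theorem memF5_of_forall {G : SimpleGraph V} (z : V → ℝ)
    (hz : z ⬝ᵥ seidelOf G *ᵥ z < -5 * (z ⬝ᵥ z))
    (h : ∀ w (x : V → ℝ), x w = 0 → -5 * (x ⬝ᵥ x) ≤ x ⬝ᵥ seidelOf G *ᵥ x) :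
    MemF5 G := by
  classical
  have : Nonempty V := not_isEmpty_iff.mp fun _ => by simp at hz
  refine ⟨lt_of_not_ge fun hle => ?_, fun s hs => ?_⟩
  · exact hz.not_ge ((le_minSeidelEig_iff G _).mp hle z)
  · obtain ⟨w, hw⟩ := (Set.ne_univ_iff_exists_notMem s).mp hs
    exact le_minSeidelEig_induce (by norm_num) (h w) hw

theorem seidelOf_eq_sub_two_smul_adjMatrix (G : SimpleGraph V) [DecidableEq V]
    [DecidableRel G.Adj] :
    seidelOf G = Matrix.of (fun _ _ => 1) - 1 - (2 : ℝ) • G.adjMatrix ℝ := by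
  ext i j
  by_cases h : i = j
  · simp [seidelOf, h]
  · by_cases hadj : G.Adj i j <;> norm_num [seidelOf, h, hadj]

theorem dotProduct_seidelOf_mulVec (G : SimpleGraph V) [DecidableRel G.Adj] (x : V → ℝ) :
    x ⬝ᵥ seidelOf G *ᵥ x =
      (∑ i, x i) ^ 2 - ∑ i, x i ^ 2 - 2 * (x ⬝ᵥ G.adjMatrix ℝ *ᵥ x) := by
  classical
  have hJ : Matrix.of (fun _ _ : V => (1 : ℝ)) *ᵥ x = fun _ => ∑ i, x i := by
    ext; simp [mulVec, dotProduct]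
  rw [seidelOf_eq_sub_two_smul_adjMatrix, sub_mulVec, sub_mulVec, dotProduct_sub,
    dotProduct_sub, one_mulVec, smul_mulVec, dotProduct_smul, hJ]
  simp [dotProduct, sq, sum_mul]

theorem dotProduct_seidelOf_bot_mulVec (x : V → ℝ) :
    x ⬝ᵥ seidelOf (⊥ : SimpleGraph V) *ᵥ x = (∑ i, x i) ^ 2 - ∑ i, x i ^ 2 := by
  simp [dotProduct_seidelOf_mulVec]

theorem seidelOf_compl (G : SimpleGraph V) : seidelOf Gᶜ = -seidelOf G := by
  ext i j
  by_cases h : i = j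
  · simp [seidelOf, h]
  · by_cases hadj : G.Adj i j <;> simp [seidelOf, h, hadj]

theorem dotProduct_seidelOf_top_mulVec (x : V → ℝ) :
    x ⬝ᵥ seidelOf (⊤ : SimpleGraph V) *ᵥ x = ∑ i, x i ^ 2 - (∑ i, x i) ^ 2 := by
  rw [← compl_bot, seidelOf_compl, neg_mulVec, dotProduct_neg, dotProduct_seidelOf_bot_mulVec,
    neg_sub]

theorem dotProduct_seidelOf_sum_bot_mulVec (G : SimpleGraph V) (z : V ⊕ W → ℝ) :
    z ⬝ᵥ seidelOf (G ⊕g ⊥) *ᵥ z =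
      (z ∘ Sum.inl) ⬝ᵥ seidelOf G *ᵥ (z ∘ Sum.inl) + (∑ j, z (.inr j)) ^ 2 -
        ∑ j, z (.inr j) ^ 2 + 2 * (∑ i, z (.inl i)) * ∑ j, z (.inr j) := by
  classical
  simp only [dotProduct_seidelOf_mulVec, SimpleGraph.dotProduct_mulVec_adjMatrix,
    Fintype.sum_sum_type]
  simp only [SimpleGraph.sum_adj, ↓reduceIte, sum_const_zero, add_zero, SimpleGraph.bot_adj,
    Function.comp_apply]
  ring

theorem dotProduct_seidelOf_completeBipartiteGraph_mulVec (x : V ⊕ W → ℝ) :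
    x ⬝ᵥ seidelOf (completeBipartiteGraph V W) *ᵥ x =
      (∑ i, x (.inl i) - ∑ j, x (.inr j)) ^ 2 - ∑ i, x (.inl i) ^ 2 - ∑ j, x (.inr j) ^ 2 := by
  classical
  simp only [dotProduct_seidelOf_mulVec, SimpleGraph.dotProduct_mulVec_adjMatrix,
    Fintype.sum_sum_type]
  simp only [completeBipartiteGraph_adj, Sum.isLeft_inl, Sum.isRight_inl, Sum.isLeft_inr,
    Sum.isRight_inr, Bool.false_eq_true, and_false, and_true, and_self, or_self, or_false,
    or_true, ↓reduceIte, sum_const_zero, zero_add, add_zero, ← mul_sum, ← sum_mul]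
  ring

theorem neg_five_mul_le_seidelOf_sum_bot (G : SimpleGraph V) (z : V ⊕ W → ℝ) {k : ℝ}
    (hk : 0 ≤ k)
    (hW : (∑ j, z (.inr j)) ^ 2 ≤ k * ∑ j, z (.inr j) ^ 2)
    (hV : k * (∑ i, z (.inl i)) ^ 2 ≤
      (k + 4) * ((z ∘ Sum.inl) ⬝ᵥ seidelOf G *ᵥ (z ∘ Sum.inl) + 5 * ∑ i, z (.inl i) ^ 2)) :
    -5 * (z ⬝ᵥ z) ≤ z ⬝ᵥ seidelOf (G ⊕g ⊥) *ᵥ z := by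
  have hzz : z ⬝ᵥ z = ∑ i, z (.inl i) ^ 2 + ∑ j, z (.inr j) ^ 2 := by
    simp [dotProduct, Fintype.sum_sum_type, sq]
  rw [dotProduct_seidelOf_sum_bot_mulVec, hzz]
  set p := ∑ i, z (.inl i)
  set q := ∑ j, z (.inr j)
  set v := ∑ j, z (.inr j) ^ 2
  have hv : 0 ≤ v := sum_nonneg fun j _ => sq_nonneg _
  -- `k` times the right side is `((k + 4) q + k p)² + 4 (k + 4) (k v - q²)`.
  have key : 0 ≤ (k + 4) * (q ^ 2 + 4 * v + 2 * p * q) + k * p ^ 2 := by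
    rcases hk.eq_or_lt with rfl | hk
    · nlinarith
    · refine nonneg_of_mul_nonneg_right ?_ hk
      nlinarith [sq_nonneg ((k + 4) * q + k * p)]
  nlinarith

theorem memF5_sum_bot {G : SimpleGraph V} (z : V ⊕ W → ℝ)
    (hz : z ⬝ᵥ seidelOf (G ⊕g ⊥) *ᵥ z < -5 * (z ⬝ᵥ z))
    (hiso : ∀ x : V → ℝ, ((Fintype.card W - 1 : ℕ) : ℝ) * (∑ i, x i) ^ 2 ≤
      ((Fintype.card W - 1 : ℕ) + 4) * (x ⬝ᵥ seidelOf G *ᵥ x + 5 * ∑ i, x i ^ 2))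
    (hdel : ∀ (w : V) (x : V → ℝ), x w = 0 → (Fintype.card W : ℝ) * (∑ i, x i) ^ 2 ≤
      (Fintype.card W + 4) * (x ⬝ᵥ seidelOf G *ᵥ x + 5 * ∑ i, x i ^ 2)) :
    MemF5 (G ⊕g (⊥ : SimpleGraph W)) := by
  refine memF5_of_forall z hz ?_
  rintro (w | w) y hy
  · refine neg_five_mul_le_seidelOf_sum_bot G y (Nat.cast_nonneg _) ?_ (hdel w _ hy)
    simpa using sq_sum_le_card_mul_sum_sq (s := univ) (f := fun j => y (.inr j))
  · exact neg_five_mul_le_seidelOf_sum_bot G y (Nat.cast_nonneg _)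
      (sq_sum_le_card_sub_one_mul_sum_sq (x := fun j => y (.inr j)) hy) (hiso _)

end Seidel

theorem memF5_completeGraph_four_sum_bot_five :
    MemF5 (SimpleGraph.completeGraph (Fin 4) ⊕g (⊥ : SimpleGraph (Fin 5))) := by
  refine memF5_sum_bot (Sum.elim (fun _ => 5) (fun _ => -2)) ?_ (fun x => ?_) (fun w x hw => ?_)
  · rw [dotProduct_seidelOf_sum_bot_mulVec, SimpleGraph.completeGraph,
      dotProduct_seidelOf_top_mulVec]
    norm_num [dotProduct, Fintype.sum_sum_type]
  all_goals rw [SimpleGraph.completeGraph, dotProduct_seidelOf_top_mulVec]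
  · have := sq_sum_le_card_mul_sum_sq (s := univ) (f := x)
    simp only [card_univ, Fintype.card_fin, Nat.reduceSub, Nat.cast_ofNat] at this ⊢
    nlinarith
  · have := sq_sum_le_card_sub_one_mul_sum_sq hw
    simp only [Fintype.card_fin, Nat.reduceSub, Nat.cast_ofNat] at this ⊢
    nlinarith

theorem dotProduct_seidelOf_diamondG_mulVec (x : Fin 4 → ℝ) :
    x ⬝ᵥ seidelOf diamondG *ᵥ x =
      2 * x 0 * x 1 - 2 * x 2 * x 3 - 2 * (x 0 + x 1) * (x 2 + x 3) := by
  simp only [dotProduct, mulVec, Fin.sum_univ_four]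
  simp +decide only [seidelOf, diamondG, SimpleGraph.fromRel_adj, ne_eq, of_apply, ↓reduceIte,
    zero_mul, one_mul, zero_add, neg_mul, add_zero]
  ring

theorem memF5_diamondG_sum_bot_eleven :
    MemF5 (diamondG ⊕g (⊥ : SimpleGraph (Fin 11))) := by
  refine memF5_sum_bot (Sum.elim ![-13, -13, -17, -17] (fun _ => 4)) ?_ (fun x => ?_)
    (fun w x hw => ?_)
  · rw [dotProduct_seidelOf_sum_bot_mulVec, dotProduct_seidelOf_diamondG_mulVec]
    norm_num [dotProduct, Fintype.sum_sum_type, Fin.sum_univ_four,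
      Matrix.cons_val_two, Matrix.cons_val_three]
  all_goals
    rw [dotProduct_seidelOf_diamondG_mulVec, Fin.sum_univ_four, Fin.sum_univ_four]
    simp only [Fintype.card_fin, Nat.reduceSub, Nat.cast_ofNat]
  · nlinarith [sq_nonneg (x 0 - x 1), sq_nonneg (x 2 - x 3),
      sq_nonneg (2 * (x 0 + x 1) - 3 * x 2), sq_nonneg (2 * (x 0 + x 1) - 3 * x 3)]
  · obtain rfl | rfl | rfl | rfl : w = 0 ∨ w = 1 ∨ w = 2 ∨ w = 3 := by fin_cases w <;> simp
    all_goals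
      rw [hw]
      nlinarith [sq_nonneg (x 0 - x 1), sq_nonneg (x 2 - x 3), sq_nonneg (x 0 - x 2),
        sq_nonneg (x 0 - x 3), sq_nonneg (x 1 - x 2), sq_nonneg (x 1 - x 3),
        sq_nonneg (x 0 + x 1 - x 2), sq_nonneg (x 0 + x 1 - x 3)]

theorem memF5_completeBipartiteGraph_two_three_sum_bot_nineteen :
    MemF5 (completeBipartiteGraph (Fin 2) (Fin 3) ⊕g (⊥ : SimpleGraph (Fin 19))) := by
  refine memF5_sum_bot (Sum.elim (Sum.elim (fun _ => -95) (fun _ => -76)) (fun _ => 18)) ?_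
    (fun x => ?_) (fun w x hw => ?_)
  · rw [dotProduct_seidelOf_sum_bot_mulVec, dotProduct_seidelOf_completeBipartiteGraph_mulVec]
    norm_num [dotProduct, Fintype.sum_sum_type]
  all_goals
    rw [dotProduct_seidelOf_completeBipartiteGraph_mulVec, Fintype.sum_sum_type,
      Fintype.sum_sum_type]
    have hA := sq_sum_le_card_mul_sum_sq (s := univ) (f := fun i => x (.inl i))
    have hB := sq_sum_le_card_mul_sum_sq (s := univ) (f := fun j => x (.inr j))
    simp only [card_univ, Fintype.card_fin, Nat.reduceSub, Nat.cast_ofNat] at hA hB ⊢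
  · nlinarith [sq_nonneg (6 * ∑ i, x (.inl i) - 5 * ∑ j, x (.inr j))]
  · rcases w with i | i
    · have hA' := sq_sum_le_card_sub_one_mul_sum_sq (x := fun i => x (.inl i)) hw
      simp only [Fintype.card_fin, Nat.reduceSub, Nat.cast_one] at hA'
      nlinarith [sq_nonneg (2 * ∑ i, x (.inl i) - ∑ j, x (.inr j))]
    · have hB' := sq_sum_le_card_sub_one_mul_sum_sq (x := fun j => x (.inr j)) hw
      simp only [Fintype.card_fin, Nat.reduceSub, Nat.cast_ofNat] at hB'
      nlinarith [sq_nonneg (∑ i, x (.inl i) - ∑ j, x (.inr j))]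

/-- `K₄(5)`, `K_{2,1,1}(11)` and `K_{2,3}(19)` all belong to `F_{-5}`. -/
theorem stmt_15 :
    MemF5 (SimpleGraph.completeGraph (Fin 4) ⊕g (⊥ : SimpleGraph (Fin 5))) ∧
    MemF5 (diamondG ⊕g (⊥ : SimpleGraph (Fin 11))) ∧
    MemF5 (completeBipartiteGraph (Fin 2) (Fin 3) ⊕g (⊥ : SimpleGraph (Fin 19))) :=
  ⟨memF5_completeGraph_four_sum_bot_five, memF5_diamondG_sum_bot_eleven,
    memF5_completeBipartiteGraph_two_three_sum_bot_nineteen⟩
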